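/- arXiv:2009.05545 — 6 statements merged into one kernel-verified Lean document; each statement's English description precedes it below -/
import Mathlib

section
/- If F : A → B is a double functor such that V(F) is a trivial fibration of 2-categories, then H(F) is also a trivial fibration of 2-categories; indeed, H(F) is a retract of V(F) via the assignment sending an object of H(A) to its identity vertical morphism in V(A). -/
universe u

/-- A (strict) double category: objects, horizontal and vertical morphisms, and squares,
with horizontal and vertical compositions satisfying strict unit, associativity and
interchange laws (stated with `HEq` where the boundaries only agree propositionally). -/
structure DoubleCat : Type (u + 1) where
  Obj : Type u
  Hor : Obj → Obj → Type u
  Ver : Obj → Obj → Type u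
  Sq : ∀ {a b c d : Obj}, Ver a c → Ver b d → Hor a b → Hor c d → Type u
  hId : ∀ a, Hor a a
  hComp : ∀ {a b c}, Hor a b → Hor b c → Hor a c
  vId : ∀ a, Ver a a
  vComp : ∀ {a b c}, Ver a b → Ver b c → Ver a c
  idSqH : ∀ {a b} (u : Ver a b), Sq u u (hId a) (hId b)
  idSqV : ∀ {a b} (f : Hor a b), Sq (vId a) (vId b) f f
  compH : ∀ {a b c a' b' c'} {u : Ver a a'} {v : Ver b b'} {w : Ver c c'}
      {f : Hor a b} {g : Hor a' b'} {f₂ : Hor b c} {g₂ : Hor b' c'},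
      Sq u v f g → Sq v w f₂ g₂ → Sq u w (hComp f f₂) (hComp g g₂)
  compV : ∀ {a b c d e e'} {u : Ver a c} {v : Ver b d} {u' : Ver c e} {v' : Ver d e'}
      {f : Hor a b} {g : Hor c d} {h : Hor e e'},
      Sq u v f g → Sq u' v' g h → Sq (vComp u u') (vComp v v') f h
  hId_comp : ∀ {a b} (f : Hor a b), hComp (hId a) f = f
  hComp_id : ∀ {a b} (f : Hor a b), hComp f (hId b) = f
  hAssoc : ∀ {a b c d} (f : Hor a b) (g : Hor b c) (h : Hor c d),
      hComp (hComp f g) h = hComp f (hComp g h)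
  vId_comp : ∀ {a b} (u : Ver a b), vComp (vId a) u = u
  vComp_id : ∀ {a b} (u : Ver a b), vComp u (vId b) = u
  vAssoc : ∀ {a b c d} (u : Ver a b) (v : Ver b c) (w : Ver c d),
      vComp (vComp u v) w = vComp u (vComp v w)
  idSqH_vComp : ∀ {a b c} (u : Ver a b) (v : Ver b c),
      compV (idSqH u) (idSqH v) = idSqH (vComp u v)
  idSqV_hComp : ∀ {a b c} (f : Hor a b) (g : Hor b c),
      compH (idSqV f) (idSqV g) = idSqV (hComp f g)
  idSqH_compH : ∀ {a b a' b'} {u : Ver a a'} {v : Ver b b'} {f : Hor a b} {g : Hor a' b'}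
      (α : Sq u v f g), HEq (compH (idSqH u) α) α
  compH_idSqH : ∀ {a b a' b'} {u : Ver a a'} {v : Ver b b'} {f : Hor a b} {g : Hor a' b'}
      (α : Sq u v f g), HEq (compH α (idSqH v)) α
  idSqV_compV : ∀ {a b a' b'} {u : Ver a a'} {v : Ver b b'} {f : Hor a b} {g : Hor a' b'}
      (α : Sq u v f g), HEq (compV (idSqV f) α) α
  compV_idSqV : ∀ {a b a' b'} {u : Ver a a'} {v : Ver b b'} {f : Hor a b} {g : Hor a' b'}
      (α : Sq u v f g), HEq (compV α (idSqV g)) α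
  compH_assoc : ∀ {a b c d a' b' c' d'}
      {u : Ver a a'} {v : Ver b b'} {w : Ver c c'} {z : Ver d d'}
      {f : Hor a b} {g : Hor a' b'} {f₂ : Hor b c} {g₂ : Hor b' c'} {f₃ : Hor c d} {g₃ : Hor c' d'}
      (α : Sq u v f g) (β : Sq v w f₂ g₂) (γ : Sq w z f₃ g₃),
      HEq (compH (compH α β) γ) (compH α (compH β γ))
  compV_assoc : ∀ {a b c d a' b' c' d'}
      {u : Ver a a'} {u' : Ver a' c} {u'' : Ver c d}
      {v : Ver b b'} {v' : Ver b' c'} {v'' : Ver c' d'}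
      {f : Hor a b} {g : Hor a' b'} {h : Hor c c'} {k : Hor d d'}
      (α : Sq u v f g) (β : Sq u' v' g h) (γ : Sq u'' v'' h k),
      HEq (compV (compV α β) γ) (compV α (compV β γ))
  interchange : ∀ {a₀ a₁ a₂ b₀ b₁ b₂ c₀ c₁ c₂ : Obj}
      {u₀ : Ver a₀ b₀} {u₁ : Ver a₁ b₁} {u₂ : Ver a₂ b₂}
      {w₀ : Ver b₀ c₀} {w₁ : Ver b₁ c₁} {w₂ : Ver b₂ c₂}
      {f₀ : Hor a₀ a₁} {f₁ : Hor a₁ a₂} {g₀ : Hor b₀ b₁} {g₁ : Hor b₁ b₂}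
      {h₀ : Hor c₀ c₁} {h₁ : Hor c₁ c₂}
      (α : Sq u₀ u₁ f₀ g₀) (β : Sq u₁ u₂ f₁ g₁)
      (α' : Sq w₀ w₁ g₀ h₀) (β' : Sq w₁ w₂ g₁ h₁),
      compV (compH α β) (compH α' β') = compH (compV α α') (compV β β')

namespace DoubleCat

variable (A : DoubleCat)

/-- Vertical composition of globular squares (squares with identity vertical boundaries). -/
def gcomp {a b : A.Obj} {f g h : A.Hor a b}
    (α : A.Sq (A.vId a) (A.vId b) f g) (β : A.Sq (A.vId a) (A.vId b) g h) :
    A.Sq (A.vId a) (A.vId b) f h :=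
  cast (by rw [A.vId_comp, A.vId_comp]) (A.compV α β)

/-- A vertically invertible globular square. -/
structure GlobIso {a b : A.Obj} (f g : A.Hor a b) where
  hom : A.Sq (A.vId a) (A.vId b) f g
  inv : A.Sq (A.vId a) (A.vId b) g f
  hom_inv : A.gcomp hom inv = A.idSqV f
  inv_hom : A.gcomp inv hom = A.idSqV g

end DoubleCat

/-- A (strict) double functor between double categories. -/
structure DoubleFunctor (A B : DoubleCat.{u}) where
  obj : A.Obj → B.Obj
  hor : ∀ {a b}, A.Hor a b → B.Hor (obj a) (obj b)
  ver : ∀ {a b}, A.Ver a b → B.Ver (obj a) (obj b)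
  sq : ∀ {a b c d} {u : A.Ver a c} {v : A.Ver b d} {f : A.Hor a b} {g : A.Hor c d},
      A.Sq u v f g → B.Sq (ver u) (ver v) (hor f) (hor g)
  hor_id : ∀ a, hor (A.hId a) = B.hId (obj a)
  hor_comp : ∀ {a b c} (f : A.Hor a b) (g : A.Hor b c),
      hor (A.hComp f g) = B.hComp (hor f) (hor g)
  ver_id : ∀ a, ver (A.vId a) = B.vId (obj a)
  ver_comp : ∀ {a b c} (u : A.Ver a b) (v : A.Ver b c),
      ver (A.vComp u v) = B.vComp (ver u) (ver v)
  sq_idH : ∀ {a b} (u : A.Ver a b), HEq (sq (A.idSqH u)) (B.idSqH (ver u))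
  sq_idV : ∀ {a b} (f : A.Hor a b), HEq (sq (A.idSqV f)) (B.idSqV (hor f))
  sq_compH : ∀ {a b c a' b' c'} {u : A.Ver a a'} {v : A.Ver b b'} {w : A.Ver c c'}
      {f : A.Hor a b} {g : A.Hor a' b'} {f₂ : A.Hor b c} {g₂ : A.Hor b' c'}
      (α : A.Sq u v f g) (β : A.Sq v w f₂ g₂),
      HEq (sq (A.compH α β)) (B.compH (sq α) (sq β))
  sq_compV : ∀ {a b c d e e'} {u : A.Ver a c} {v : A.Ver b d} {u' : A.Ver c e} {v' : A.Ver d e'}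
      {f : A.Hor a b} {g : A.Hor c d} {h : A.Hor e e'}
      (α : A.Sq u v f g) (β : A.Sq u' v' g h),
      HEq (sq (A.compV α β)) (B.compV (sq α) (sq β))

namespace DoubleFunctor

variable {A B : DoubleCat.{u}} (F : DoubleFunctor A B)

/-- The action of a double functor on globular squares. -/
def gsq {a b : A.Obj} {f g : A.Hor a b} (α : A.Sq (A.vId a) (A.vId b) f g) :
    B.Sq (B.vId (F.obj a)) (B.vId (F.obj b)) (F.hor f) (F.hor g) :=
  cast (by rw [F.ver_id, F.ver_id]) (F.sq α)

end DoubleFunctor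

/-- Objects of the 2-category `V(A)`: the vertical morphisms of `A`. -/
structure VObj (A : DoubleCat.{u}) where
  {src : A.Obj}
  {tgt : A.Obj}
  ver : A.Ver src tgt

/-- Morphisms of the 2-category `V(A)`: the squares of `A`. -/
structure VHom {A : DoubleCat.{u}} (u v : VObj A) where
  top : A.Hor u.src v.src
  bot : A.Hor u.tgt v.tgt
  sq : A.Sq u.ver v.ver top bot

/-- 2-morphisms of the 2-category `V(A)`: compatible pairs of globular squares. -/
structure V2Cell {A : DoubleCat.{u}} {u v : VObj A} (p q : VHom u v) where
  σ₀ : A.Sq (A.vId u.src) (A.vId v.src) p.top q.top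
  σ₁ : A.Sq (A.vId u.tgt) (A.vId v.tgt) p.bot q.bot
  pasting : HEq (A.compV σ₀ q.sq) (A.compV p.sq σ₁)

namespace DoubleCat

/-- The vertical identity, as an object of `V(A)`. -/
def vIdObj (A : DoubleCat.{u}) (a : A.Obj) : VObj A := ⟨A.vId a⟩

/-- An object `I` of a double category is double bi-initial: there is a horizontal
morphism from `I` to every object, and a unique square from the vertical identity on `I`
to any vertical morphism with any prescribed top and bottom. -/
def DoubleBiInitial (A : DoubleCat.{u}) (I : A.Obj) : Prop :=
  (∀ X : A.Obj, Nonempty (A.Hor I X)) ∧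
  (∀ {X Y : A.Obj} (u : A.Ver X Y) (f : A.Hor I X) (g : A.Hor I Y),
    ∃! _α : A.Sq (A.vId I) u f g, True)

/-- `I` is bi-initial in the underlying horizontal 2-category `H(A)`. -/
def HBiInitial (A : DoubleCat.{u}) (I : A.Obj) : Prop :=
  (∀ X : A.Obj, Nonempty (A.Hor I X)) ∧
  (∀ {X : A.Obj} (f g : A.Hor I X),
    ∃! _α : A.Sq (A.vId I) (A.vId X) f g, True)

/-- `u₀` is bi-initial in the 2-category `V(A)` of vertical morphisms. -/
def VBiInitial (A : DoubleCat.{u}) (u₀ : VObj A) : Prop :=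
  (∀ v : VObj A, Nonempty (VHom u₀ v)) ∧
  (∀ (v : VObj A) (p q : VHom u₀ v), ∃! _σ : V2Cell p q, True)

end DoubleCat

namespace DoubleFunctor

variable {A B : DoubleCat.{u}} (F : DoubleFunctor A B)

/-- A double functor is a double trivial fibration: surjective on objects, full on
horizontal and on vertical morphisms, fully faithful on squares. -/
def IsDoubleTrivialFibration : Prop :=
  (∀ b, ∃ a, F.obj a = b) ∧
  (∀ {a a' : A.Obj} (k : B.Hor (F.obj a) (F.obj a')), ∃ f, F.hor f = k) ∧
  (∀ {a a' : A.Obj} (w : B.Ver (F.obj a) (F.obj a')), ∃ u, F.ver u = w) ∧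
  (∀ {a b c d} (u : A.Ver a c) (v : A.Ver b d) (f : A.Hor a b) (g : A.Hor c d)
    (β : B.Sq (F.ver u) (F.ver v) (F.hor f) (F.hor g)),
    ∃! α : A.Sq u v f g, F.sq α = β)

/-- The induced 2-functor `H(F)` between underlying horizontal 2-categories is a trivial
fibration. -/
def HTrivialFibration : Prop :=
  (∀ b, ∃ a, F.obj a = b) ∧
  (∀ {a a' : A.Obj} (k : B.Hor (F.obj a) (F.obj a')), ∃ f, F.hor f = k) ∧
  (∀ {a a' : A.Obj} (f g : A.Hor a a')
    (β : B.Sq (B.vId (F.obj a)) (B.vId (F.obj a')) (F.hor f) (F.hor g)),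
    ∃! α : A.Sq (A.vId a) (A.vId a') f g, F.gsq α = β)

/-- The action of a double functor on the objects of `V(A)`. -/
def vObj (u : VObj A) : VObj B := ⟨F.ver u.ver⟩

/-- The action of a double functor on the morphisms of `V(A)`. -/
def vHom {u v : VObj A} (p : VHom u v) : VHom (F.vObj u) (F.vObj v) :=
  ⟨F.hor p.top, F.hor p.bot, F.sq p.sq⟩

/-- The induced 2-functor `V(F)` between the 2-categories of vertical morphisms is a
trivial fibration.  (The action of `V(F)` on a 2-morphism `σ = (σ₀, σ₁)` is given
componentwise by `F.gsq`.) -/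
def VTrivialFibration : Prop :=
  (∀ v : VObj B, ∃ u : VObj A, F.vObj u = v) ∧
  (∀ (u u' : VObj A) (q : VHom (F.vObj u) (F.vObj u')), ∃ p : VHom u u', F.vHom p = q) ∧
  (∀ (u u' : VObj A) (p q : VHom u u') (τ : V2Cell (F.vHom p) (F.vHom q)),
    ∃! σ : V2Cell p q, F.gsq σ.σ₀ = τ.σ₀ ∧ F.gsq σ.σ₁ = τ.σ₁)

end DoubleFunctor

/-!
STATEMENT 9: If `V(F)` is a trivial fibration of 2-categories then so is `H(F)`;
moreover the assignment sending an object of `H(A)` to its identity vertical morphism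
commutes with `F`, exhibiting `H(F)` as a retract of `V(F)`.
-/
/-- HEq congruence for vertical composition of squares. -/
theorem compV_hcongr {A : DoubleCat.{u}} {a b c d e e' : A.Obj}
    {u u' : A.Ver a c} {v v' : A.Ver b d} {w w' : A.Ver c e} {z z' : A.Ver d e'}
    {f f' : A.Hor a b} {g g' : A.Hor c d} {k k' : A.Hor e e'}
    (hu : u = u') (hv : v = v') (hw : w = w') (hz : z = z')
    (hf : f = f') (hg : g = g') (hk : k = k')
    {α : A.Sq u v f g} {α' : A.Sq u' v' f' g'}
    {β : A.Sq w z g k} {β' : A.Sq w' z' g' k'}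
    (hα : HEq α α') (hβ : HEq β β') :
    HEq (A.compV α β) (A.compV α' β') := by
  subst hu hv hw hz hf hg hk; cases hα; cases hβ; rfl

theorem stmt9 {A B : DoubleCat.{u}} (F : DoubleFunctor A B)
    (h : F.VTrivialFibration) :
    F.HTrivialFibration ∧ ∀ a : A.Obj, F.vObj (A.vIdObj a) = B.vIdObj (F.obj a) := by
  obtain ⟨h1, h2, h3⟩ := h
  constructor
  · refine ⟨?_, ?_, ?_⟩
    · intro b
      obtain ⟨u, hu⟩ := h1 (B.vIdObj b)
      exact ⟨u.src, congrArg VObj.src hu⟩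
    · intro a a' k
      have sqk : B.Sq (F.ver (A.vId a)) (F.ver (A.vId a')) k k :=
        cast (by rw [F.ver_id, F.ver_id]) (B.idSqV k)
      obtain ⟨p, hp⟩ := h2 (A.vIdObj a) (A.vIdObj a') ⟨k, k, sqk⟩
      exact ⟨p.top, congrArg VHom.top hp⟩
    · intro a a' f g β
      set p : VHom (A.vIdObj a) (A.vIdObj a') := ⟨f, f, A.idSqV f⟩ with hpdef
      set q : VHom (A.vIdObj a) (A.vIdObj a') := ⟨g, g, A.idSqV g⟩ with hqdef
      have pasting : HEq (B.compV β (F.sq (A.idSqV g))) (B.compV (F.sq (A.idSqV f)) β) := by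
        have e1 : HEq (B.compV β (F.sq (A.idSqV g))) (B.compV β (B.idSqV (F.hor g))) :=
          compV_hcongr rfl rfl (F.ver_id a) (F.ver_id a') rfl rfl rfl (HEq.refl β)
            (F.sq_idV g)
        have e2 : HEq (B.compV (F.sq (A.idSqV f)) β) (B.compV (B.idSqV (F.hor f)) β) :=
          compV_hcongr (F.ver_id a) (F.ver_id a') rfl rfl rfl rfl rfl (F.sq_idV f)
            (HEq.refl β)
        exact (e1.trans (B.compV_idSqV β)).trans ((e2.trans (B.idSqV_compV β)).symm)
      obtain ⟨σ, ⟨hσ₀, hσ₁⟩, huniq⟩ := h3 (A.vIdObj a) (A.vIdObj a') p q ⟨β, β, pasting⟩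
      refine ⟨σ.σ₀, hσ₀, ?_⟩
      intro α hα
      have pasting' : HEq (A.compV α q.sq) (A.compV p.sq α) :=
        (A.compV_idSqV α).trans (A.idSqV_compV α).symm
      have hσ' : (⟨α, α, pasting'⟩ : V2Cell p q) = σ :=
        huniq ⟨α, α, pasting'⟩ ⟨hα, hα⟩
      exact congrArg V2Cell.σ₀ hσ'
  · intro a
    show (⟨F.ver (A.vId a)⟩ : VObj B) = ⟨B.vId (F.obj a)⟩
    rw [F.ver_id]
end

section
/- An object I of a double category A is double bi-initial if and only if: (i) for every object X of A there is a horizontal morphism I → X, and (ii) for every vertical morphism u : X ↛ Y and every pair of horizontal morphisms f : I → X and g : I → Y, there is a unique square with top f, bottom g, left boundary the vertical identity on I, and right boundary u. -/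
universe u

/-!
STATEMENT 10: An object `I` of a double category `A` is double bi-initial — i.e. the
projection from the pseudo-slice double category `I//A` to `A` is a double trivial
fibration — if and only if (i) there is a horizontal morphism from `I` to every object,
and (ii) for every vertical morphism `u : X ↛ Y` and horizontal morphisms `f : I → X`,
`g : I → Y` there is a unique square with top `f`, bottom `g`, left boundary `vId I` and
right boundary `u`.
-/

namespace DoubleCat

variable (A : DoubleCat.{u}) (I : A.Obj)

/-- Objects of the pseudo-slice double category `I//A`. -/
abbrev DSObj : Type u := Σ X : A.Obj, A.Hor I X

/-- Horizontal morphisms of `I//A`: a horizontal morphism together with a vertically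
invertible globular filler square. -/
abbrev DSHor (s t : DSObj A I) : Type u :=
  Σ b : A.Hor s.1 t.1, A.GlobIso t.2 (A.hComp s.2 b)

/-- Vertical morphisms of `I//A`: a vertical morphism together with a square from the
vertical identity of `I`. -/
abbrev DSVer (s t : DSObj A I) : Type u :=
  Σ u : A.Ver s.1 t.1, A.Sq (A.vId I) u s.2 t.2

/-- The compatibility (pasting) condition making a square of `A` into a square of
`I//A`. -/
def DSSqCond {s t s' t' : DSObj A I} (hb : DSHor A I s t) (hc : DSHor A I s' t')
    (vu : DSVer A I s s') (vv : DSVer A I t t')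
    (β : A.Sq vu.1 vv.1 hb.1 hc.1) : Prop :=
  HEq (A.compV hb.2.hom (A.compH vu.2 β)) (A.compV vv.2 hc.2.hom)

/-- The projection double functor `I//A ⟶ A` is a double trivial fibration: surjective
on objects, full on horizontal morphisms, full on vertical morphisms and fully faithful
on squares. -/
def DSliceProjTrivialFibration : Prop :=
  (∀ X : A.Obj, ∃ s : DSObj A I, s.1 = X) ∧
  (∀ (s t : DSObj A I) (b : A.Hor s.1 t.1), ∃ h : DSHor A I s t, h.1 = b) ∧
  (∀ (s t : DSObj A I) (u : A.Ver s.1 t.1), ∃ v : DSVer A I s t, v.1 = u) ∧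
  (∀ {s t s' t' : DSObj A I} (hb : DSHor A I s t) (hc : DSHor A I s' t')
    (vu : DSVer A I s s') (vv : DSVer A I t t') (β : A.Sq vu.1 vv.1 hb.1 hc.1),
    ∃! γ : { β' : A.Sq vu.1 vv.1 hb.1 hc.1 // DSSqCond A I hb hc vu vv β' }, γ.1 = β)

end DoubleCat

namespace DoubleCatAux

variable {A : DoubleCat.{u}}

theorem sq_congr {a b c d : A.Obj} {u u' : A.Ver a c} {v v' : A.Ver b d}
    {f f' : A.Hor a b} {g g' : A.Hor c d}
    (hu : u = u') (hv : v = v') (hf : f = f') (hg : g = g') :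
    A.Sq u v f g = A.Sq u' v' f' g' := by subst hu hv hf hg; rfl

theorem heq_via {α β γ : Type u} (h1 : α = γ) (h2 : β = γ)
    (hs : ∀ x y : γ, x = y) (a : α) (b : β) : HEq a b := by
  subst h1; subst h2; exact heq_of_eq (hs a b)

theorem compV_heq_right {a b c d e e' : A.Obj} {u : A.Ver a c} {v : A.Ver b d}
    {u' w : A.Ver c e} {v' z : A.Ver d e'} {f : A.Hor a b} {g : A.Hor c d} {h k : A.Hor e e'}
    (α : A.Sq u v f g) (x : A.Sq u' v' g h) (y : A.Sq w z g k)
    (h1 : u' = w) (h2 : v' = z) (h3 : h = k) (hxy : HEq x y) :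
    HEq (A.compV α x) (A.compV α y) := by
  subst h1; subst h2; subst h3; rw [eq_of_heq hxy]

/-- Cancel a vertically invertible globular square on the bottom. -/
theorem cancel_right {I X Y : A.Obj} {u : A.Ver X Y} {f : A.Hor I X} {g g' : A.Hor I Y}
    (E : A.GlobIso g g') (α α' : A.Sq (A.vId I) u f g)
    (h : A.compV α E.hom = A.compV α' E.hom) : α = α' := by
  have s1 : HEq (A.compV E.hom E.inv) (A.idSqV g) := by
    have hi := E.hom_inv
    unfold DoubleCat.gcomp at hi
    rw [← hi]
    exact (cast_heq _ _).symm
  have s2 : HEq (A.compV α (A.compV E.hom E.inv)) (A.compV α (A.idSqV g)) :=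
    compV_heq_right α _ _ (A.vComp_id _) (A.vComp_id _) rfl s1
  have s2' : HEq (A.compV α' (A.compV E.hom E.inv)) (A.compV α' (A.idSqV g)) :=
    compV_heq_right α' _ _ (A.vComp_id _) (A.vComp_id _) rfl s1
  have mid : HEq (A.compV (A.compV α E.hom) E.inv) (A.compV (A.compV α' E.hom) E.inv) :=
    heq_of_eq (congrArg (fun z => A.compV z E.inv) h)
  have chain : HEq α α' :=
    ((A.compV_idSqV α).symm.trans (s2.symm.trans
      (((A.compV_assoc α E.hom E.inv).symm.trans mid).trans
        ((A.compV_assoc α' E.hom E.inv).trans (s2'.trans (A.compV_idSqV α')))))).symm.symm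
  exact eq_of_heq chain

end DoubleCatAux

open DoubleCatAux in
theorem stmt10 {A : DoubleCat.{u}} (I : A.Obj) :
    A.DSliceProjTrivialFibration I ↔ A.DoubleBiInitial I := by
  constructor
  · rintro ⟨t1, t2, t3, t4⟩
    have cond4 : ∀ {s t s' t' : A.DSObj I} (hb : A.DSHor I s t) (hc : A.DSHor I s' t')
        (vu : A.DSVer I s s') (vv : A.DSVer I t t') (β : A.Sq vu.1 vv.1 hb.1 hc.1),
        A.DSSqCond I hb hc vu vv β := by
      intro s t s' t' hb hc vu vv β
      obtain ⟨γ, hγ, -⟩ := t4 hb hc vu vv β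
      exact hγ ▸ γ.2
    constructor
    · intro X
      obtain ⟨⟨X', f⟩, h⟩ := t1 X
      dsimp at h
      subst h
      exact ⟨f⟩
    · intro X Y u f g
      obtain ⟨⟨u', α⟩, h⟩ := t3 ⟨X, f⟩ ⟨Y, g⟩ u
      dsimp at h
      subst h
      refine ⟨α, trivial, ?_⟩
      intro α' _
      obtain ⟨⟨b₁, E₁⟩, hb1⟩ := t2 ⟨X, f⟩ ⟨X, f⟩ (A.hId X)
      dsimp at hb1; subst hb1
      obtain ⟨⟨b₂, E₂⟩, hb2⟩ := t2 ⟨Y, g⟩ ⟨Y, g⟩ (A.hId Y)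
      dsimp at hb2; subst hb2
      have h1 := cond4 ⟨A.hId X, E₁⟩ ⟨A.hId Y, E₂⟩ ⟨u', α'⟩ ⟨u', α⟩ (A.idSqH u')
      have h2 := cond4 ⟨A.hId X, E₁⟩ ⟨A.hId Y, E₂⟩ ⟨u', α'⟩ ⟨u', α'⟩ (A.idSqH u')
      unfold DoubleCat.DSSqCond at h1 h2
      exact cancel_right E₂ α' α (eq_of_heq (h2.symm.trans h1))
  · rintro ⟨hne, hun⟩
    have uniq : ∀ {X Y : A.Obj} (u : A.Ver X Y) (f : A.Hor I X) (g : A.Hor I Y)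
        (a b : A.Sq (A.vId I) u f g), a = b := by
      intro X Y u f g a b
      obtain ⟨x, -, hx⟩ := hun u f g
      rw [hx a trivial, hx b trivial]
    have fill : ∀ {X Y : A.Obj} (u : A.Ver X Y) (f : A.Hor I X) (g : A.Hor I Y),
        A.Sq (A.vId I) u f g := fun u f g => (hun u f g).exists.choose
    refine ⟨?_, ?_, ?_, ?_⟩
    · exact fun X => ⟨⟨X, (hne X).some⟩, rfl⟩
    · intro s t b
      exact ⟨⟨b, ⟨fill _ _ _, fill _ _ _, uniq _ _ _ _ _, uniq _ _ _ _ _⟩⟩, rfl⟩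
    · intro s t u
      exact ⟨⟨u, fill _ _ _⟩, rfl⟩
    · intro s t s' t' hb hc vu vv β
      refine ⟨⟨β, ?_⟩, rfl, fun γ hγ => Subtype.ext hγ⟩
      unfold DoubleCat.DSSqCond
      exact heq_via (sq_congr (A.vComp_id _) (A.vId_comp _) rfl rfl)
        (sq_congr (A.vComp_id _) (A.vComp_id _) rfl rfl)
        (uniq vv.1 t.2 (A.hComp s'.2 hc.1)) _ _
end

section
/- An object I in a double category A is double bi-initial if and only if the vertical identity morphism id_I is a bi-initial object of the 2-category V(A) of vertical morphisms of A. -/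
universe u

/-!
STATEMENT 11: An object `I` of a double category `A` is double bi-initial if and only if
the vertical identity `vId I` is a bi-initial object of the 2-category `V(A)` of vertical
morphisms of `A`.
-/

theorem V2Cell.ext' {A : DoubleCat.{u}} {u v : VObj A} {p q : VHom u v}
    {σ τ : V2Cell p q} (h0 : σ.σ₀ = τ.σ₀) (h1 : σ.σ₁ = τ.σ₁) : σ = τ := by
  cases σ; cases τ; cases h0; cases h1; rfl

theorem stmt11 {A : DoubleCat.{u}} (I : A.Obj) :
    A.DoubleBiInitial I ↔ A.VBiInitial (A.vIdObj I) := by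
  constructor
  · rintro ⟨h1, h2⟩
    have key : ∀ {X Y : A.Obj} (u : A.Ver X Y) (f : A.Hor I X) (g : A.Hor I Y)
        (α β : A.Sq (A.vId I) u f g), α = β := by
      intro X Y u f g α β
      obtain ⟨γ, -, hγ⟩ := h2 u f g
      rw [hγ α trivial, hγ β trivial]
    have hpaste : ∀ {X Y : A.Obj} {w : A.Ver I I} {u u' : A.Ver X Y}
        (f : A.Hor I X) (g : A.Hor I Y) (hw : w = A.vId I) (hu : u = u')
        (α : A.Sq w u f g) (β : A.Sq w u' f g), HEq α β := by
      intro X Y w u u' f g hw hu α β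
      subst hw; subst hu
      exact heq_of_eq (key u f g α β)
    constructor
    · intro v
      obtain ⟨f⟩ := h1 v.src
      obtain ⟨g⟩ := h1 v.tgt
      obtain ⟨α, -, -⟩ := h2 v.ver f g
      exact ⟨⟨f, g, α⟩⟩
    · intro v p q
      obtain ⟨σ₀, -, -⟩ := h2 (A.vId v.src) p.top q.top
      obtain ⟨σ₁, -, -⟩ := h2 (A.vId v.tgt) p.bot q.bot
      refine ⟨⟨σ₀, σ₁, ?_⟩, trivial, ?_⟩
      · exact hpaste p.top q.bot (A.vId_comp _) (by rw [A.vId_comp, A.vComp_id]) _ _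
      · intro τ _
        exact V2Cell.ext' (key _ _ _ _ _) (key _ _ _ _ _)
  · rintro ⟨k1, k2⟩
    -- every square with identity-on-identity top/bottom boundary at I is the identity square
    have idsq : ∀ {X : A.Obj} (f : A.Hor I X)
        (σ : A.Sq (A.vId I) (A.vId X) f f), σ = A.idSqV f := by
      intro X f σ
      set v : VObj A := ⟨A.vId X⟩ with hv
      set pp : VHom (A.vIdObj I) v := ⟨f, f, A.idSqV f⟩ with hpp
      have pasta : HEq (A.compV σ pp.sq) (A.compV pp.sq σ) :=
        HEq.trans (A.compV_idSqV σ) (A.idSqV_compV σ).symm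
      have pastb : HEq (A.compV (A.idSqV f) pp.sq) (A.compV pp.sq (A.idSqV f)) := HEq.rfl
      obtain ⟨τ, -, hτ⟩ := k2 v pp pp
      have e1 : (⟨σ, σ, pasta⟩ : V2Cell pp pp) = τ := hτ _ trivial
      have e2 : (⟨A.idSqV f, A.idSqV f, pastb⟩ : V2Cell pp pp) = τ := hτ _ trivial
      have := e1.trans e2.symm
      exact congrArg V2Cell.σ₀ this
    have uniq : ∀ {X Y : A.Obj} (u : A.Ver X Y) (f : A.Hor I X) (g : A.Hor I Y)
        (α β : A.Sq (A.vId I) u f g), α = β := by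
      intro X Y u f g α β
      set v : VObj A := ⟨u⟩ with hv
      set p : VHom (A.vIdObj I) v := ⟨f, g, α⟩ with hp
      set q : VHom (A.vIdObj I) v := ⟨f, g, β⟩ with hq
      obtain ⟨τ, -, -⟩ := k2 v p q
      have h0 : τ.σ₀ = A.idSqV f := idsq f τ.σ₀
      have h1 : τ.σ₁ = A.idSqV g := idsq g τ.σ₁
      have hpa := τ.pasting
      rw [h0, h1] at hpa
      have hβ : HEq (A.compV (A.idSqV f) q.sq) β := A.idSqV_compV β
      have hα : HEq (A.compV p.sq (A.idSqV g)) α := A.compV_idSqV α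
      exact (eq_of_heq ((hβ.symm.trans hpa).trans hα)).symm
    constructor
    · intro X
      obtain ⟨p⟩ := k1 ⟨A.vId X⟩
      exact ⟨p.top⟩
    · intro X Y u f g
      obtain ⟨p⟩ := k1 ⟨u⟩
      -- connect f to p.top and p.bot to g via 2-cells into identity verticals
      obtain ⟨τ, -, -⟩ := k2 (⟨A.vId X⟩ : VObj A) ⟨f, f, A.idSqV f⟩ ⟨p.top, p.top, A.idSqV p.top⟩
      obtain ⟨ρ, -, -⟩ := k2 (⟨A.vId Y⟩ : VObj A) ⟨p.bot, p.bot, A.idSqV p.bot⟩ ⟨g, g, A.idSqV g⟩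
      have sq' : A.Sq (A.vComp (A.vId I) (A.vComp (A.vId I) (A.vId I)))
          (A.vComp (A.vId X) (A.vComp u (A.vId Y))) f g :=
        A.compV τ.σ₀ (A.compV p.sq ρ.σ₀)
      have α : A.Sq (A.vId I) u f g :=
        cast (by rw [A.vId_comp, A.vId_comp, A.vId_comp, A.vComp_id]) sq'
      exact ⟨α, trivial, fun β _ => uniq u f g β α⟩
end

section
/- Let A be a double category that has tabulators. Then an object I of A is double bi-initial if and only if I is bi-initial in the underlying horizontal 2-category H(A). -/
universe u

namespace DoubleCat

variable (A : DoubleCat.{u})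

/-- `(T, p, q, τ)` is a tabulator of the vertical morphism `u : X ↛ Y`: every square from
a vertical identity to `u` factors uniquely through `τ` via a horizontal morphism
(1-dimensional universal property), and compatible pairs of squares into top and bottom
correspond uniquely to squares into the factorizing morphisms (2-dimensional universal
property). -/
def IsTabulator {X Y : A.Obj} (u : A.Ver X Y) (T : A.Obj)
    (p : A.Hor T X) (q : A.Hor T Y) (τ : A.Sq (A.vId T) u p q) : Prop :=
  (∀ {I : A.Obj} (f : A.Hor I X) (g : A.Hor I Y) (γ : A.Sq (A.vId I) u f g),
    ∃! t : A.Hor I T,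
      (⟨A.hComp t p, A.hComp t q, A.compH (A.idSqV t) τ⟩ :
        Σ (f' : A.Hor I X) (g' : A.Hor I Y), A.Sq (A.vId I) u f' g') = ⟨f, g, γ⟩) ∧
  (∀ {I I' : A.Obj} (v : A.Ver I' I)
    (f : A.Hor I X) (g : A.Hor I Y) (γ : A.Sq (A.vId I) u f g)
    (f' : A.Hor I' X) (g' : A.Hor I' Y) (γ' : A.Sq (A.vId I') u f' g')
    (θ₀ : A.Sq v (A.vId X) f' f) (θ₁ : A.Sq v (A.vId Y) g' g),
    HEq (A.compV θ₀ γ) (A.compV γ' θ₁) →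
    ∀ (t : A.Hor I T) (t' : A.Hor I' T),
      ((⟨A.hComp t p, A.hComp t q, A.compH (A.idSqV t) τ⟩ :
        Σ (f₀ : A.Hor I X) (g₀ : A.Hor I Y), A.Sq (A.vId I) u f₀ g₀) = ⟨f, g, γ⟩) →
      ((⟨A.hComp t' p, A.hComp t' q, A.compH (A.idSqV t') τ⟩ :
        Σ (f₀ : A.Hor I' X) (g₀ : A.Hor I' Y), A.Sq (A.vId I') u f₀ g₀) = ⟨f', g', γ'⟩) →
      ∃! θ : A.Sq v (A.vId T) t' t,
        ((⟨A.hComp t' p, A.hComp t p, A.compH θ (A.idSqV p)⟩ :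
          Σ (x : A.Hor I' X) (y : A.Hor I X), A.Sq v (A.vId X) x y) = ⟨f', f, θ₀⟩) ∧
        ((⟨A.hComp t' q, A.hComp t q, A.compH θ (A.idSqV q)⟩ :
          Σ (x : A.Hor I' Y) (y : A.Hor I Y), A.Sq v (A.vId Y) x y) = ⟨g', g, θ₁⟩))

/-- A double category has tabulators if every vertical morphism admits a tabulator. -/
def HasTabulators : Prop :=
  ∀ {X Y : A.Obj} (u : A.Ver X Y),
    ∃ (T : A.Obj) (p : A.Hor T X) (q : A.Hor T Y) (τ : A.Sq (A.vId T) u p q),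
      A.IsTabulator u T p q τ

end DoubleCat

/-!
STATEMENT 13: In a double category `A` with tabulators, an object `I` is double
bi-initial if and only if `I` is bi-initial in the underlying horizontal 2-category
`H(A)`.
-/
namespace DoubleCat

lemma compV_congr_bot {A : DoubleCat.{u}} {a b c d e e' : A.Obj} {u : A.Ver a c}
    {v : A.Ver b d} {u' : A.Ver c e} {v' : A.Ver d e'} {f : A.Hor a b} {g : A.Hor c d}
    {h h' : A.Hor e e'} (hh : h = h')
    {β : A.Sq u' v' g h} {β' : A.Sq u' v' g h'} (hβ : HEq β β')
    (α : A.Sq u v f g) : HEq (A.compV α β) (A.compV α β') := by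
  subst hh
  rw [eq_of_heq hβ]

lemma compV_congr_top {A : DoubleCat.{u}} {a b c d e e' : A.Obj} {u : A.Ver a c}
    {v : A.Ver b d} {u' : A.Ver c e} {v' : A.Ver d e'} {f f' : A.Hor a b} {g : A.Hor c d}
    {h : A.Hor e e'} (hf : f = f')
    {α : A.Sq u v f g} {α' : A.Sq u v f' g} (hα : HEq α α')
    (β : A.Sq u' v' g h) : HEq (A.compV α β) (A.compV α' β) := by
  subst hf
  rw [eq_of_heq hα]

lemma compH_congr {A : DoubleCat.{u}} {a b c a' b' c' : A.Obj}
    {u u₂ : A.Ver a a'} {v v₂ : A.Ver b b'} {w w₂ : A.Ver c c'}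
    {f : A.Hor a b} {g : A.Hor a' b'} {f₂ : A.Hor b c} {g₂ : A.Hor b' c'}
    (hu : u = u₂) (hv : v = v₂) (hw : w = w₂)
    {α : A.Sq u v f g} {α' : A.Sq u₂ v₂ f g}
    {β : A.Sq v w f₂ g₂} {β' : A.Sq v₂ w₂ f₂ g₂}
    (hα : HEq α α') (hβ : HEq β β') :
    HEq (A.compH α β) (A.compH α' β') := by
  subst hu; subst hv; subst hw
  rw [eq_of_heq hα, eq_of_heq hβ]

lemma sigma3 {A : DoubleCat.{u}} {I X Y : A.Obj} {u : A.Ver X Y}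
    {f₀ f : A.Hor I X} {g₀ g : A.Hor I Y}
    {γ₀ : A.Sq (A.vId I) u f₀ g₀} {γ : A.Sq (A.vId I) u f g}
    (h : (⟨f₀, g₀, γ₀⟩ : Σ (f' : A.Hor I X) (g' : A.Hor I Y), A.Sq (A.vId I) u f' g')
        = ⟨f, g, γ⟩) :
    f₀ = f ∧ g₀ = g ∧ HEq γ₀ γ := by
  injection h with h1 h2
  subst h1
  injection eq_of_heq h2 with h3 h4
  subst h3
  exact ⟨rfl, rfl, h4⟩

end DoubleCat

theorem stmt13 {A : DoubleCat.{u}} (hTab : A.HasTabulators) (I : A.Obj) :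
    A.DoubleBiInitial I ↔ A.HBiInitial I := by
  constructor
  · rintro ⟨h1, h2⟩
    exact ⟨h1, fun {X} f g => h2 (A.vId X) f g⟩
  · rintro ⟨h1, h2⟩
    refine ⟨h1, ?_⟩
    intro X Y u f g
    obtain ⟨T, p, q, τ, htab1, -⟩ := hTab u
    -- any two parallel globular squares out of I are equal
    have hu : ∀ {Z : A.Obj} {f' g' : A.Hor I Z}
        (α β : A.Sq (A.vId I) (A.vId Z) f' g'), α = β := by
      intro Z f' g' α β
      obtain ⟨c, -, hc⟩ := h2 f' g'
      exact (hc α trivial).trans (hc β trivial).symm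
    have globHEq : ∀ {Z : A.Obj} {f₁ g₁ f₂ g₂ : A.Hor I Z}, f₁ = f₂ → g₁ = g₂ →
        ∀ (α : A.Sq (A.vId I) (A.vId Z) f₁ g₁) (β : A.Sq (A.vId I) (A.vId Z) f₂ g₂),
        HEq α β := by
      intro Z f₁ g₁ f₂ g₂ hf hg α β
      subst hf; subst hg
      exact heq_of_eq (hu α β)
    have huniq : ∀ γ₁ γ₂ : A.Sq (A.vId I) u f g, γ₁ = γ₂ := by
      intro γ₁ γ₂
      obtain ⟨t₁, ht₁, -⟩ := htab1 f g γ₁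
      obtain ⟨t₂, ht₂, -⟩ := htab1 f g γ₂
      obtain ⟨e1, e3, he1⟩ := DoubleCat.sigma3 ht₁
      obtain ⟨e2, e4, he2⟩ := DoubleCat.sigma3 ht₂
      subst e1; subst e3
      obtain ⟨θ, -, -⟩ := h2 t₁ t₂
      have key1 : HEq γ₁ (A.compH θ τ) := by
        have hD : HEq (A.compH θ (A.idSqV q)) (A.idSqV (A.hComp t₁ q)) :=
          globHEq rfl e4 _ _
        have s1 : HEq (A.compV (A.compH (A.idSqV t₁) τ) (A.compH θ (A.idSqV q)))
            (A.compH (A.idSqV t₁) τ) :=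
          (DoubleCat.compV_congr_bot e4 hD _).trans (A.compV_idSqV _)
        have s2 := A.interchange (A.idSqV t₁) τ θ (A.idSqV q)
        have s3 : HEq (A.compH (A.compV (A.idSqV t₁) θ) (A.compV τ (A.idSqV q)))
            (A.compH θ τ) :=
          DoubleCat.compH_congr (A.vId_comp _) (A.vId_comp _) (A.vComp_id _)
            (A.idSqV_compV θ) (A.compV_idSqV τ)
        exact he1.symm.trans (s1.symm.trans ((heq_of_eq s2).trans s3))
      have key2 : HEq γ₂ (A.compH θ τ) := by
        have hD' : HEq (A.compH θ (A.idSqV p)) (A.idSqV (A.hComp t₂ p)) :=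
          globHEq e2.symm rfl _ _
        have s1' : HEq (A.compV (A.compH θ (A.idSqV p)) (A.compH (A.idSqV t₂) τ))
            (A.compH (A.idSqV t₂) τ) :=
          (DoubleCat.compV_congr_top e2.symm hD' _).trans (A.idSqV_compV _)
        have s2' := A.interchange θ (A.idSqV p) (A.idSqV t₂) τ
        have s3' : HEq (A.compH (A.compV θ (A.idSqV t₂)) (A.compV (A.idSqV p) τ))
            (A.compH θ τ) :=
          DoubleCat.compH_congr (A.vId_comp _) (A.vId_comp _) (A.vId_comp _)
            (A.compV_idSqV θ) (A.idSqV_compV τ)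
        exact he2.symm.trans (s1'.symm.trans ((heq_of_eq s2').trans s3'))
      exact eq_of_heq (key1.trans key2.symm)
    -- existence
    obtain ⟨t⟩ := h1 T
    obtain ⟨α, -, -⟩ := h2 f (A.hComp t p)
    obtain ⟨β, -, -⟩ := h2 (A.hComp t q) g
    have w := A.compV α (A.compV (A.compH (A.idSqV t) τ) β)
    have hcast : A.Sq (A.vComp (A.vId I) (A.vComp (A.vId I) (A.vId I)))
        (A.vComp (A.vId X) (A.vComp u (A.vId Y))) f g = A.Sq (A.vId I) u f g := by
      rw [A.vId_comp (A.vComp (A.vId I) (A.vId I)), A.vId_comp (A.vId I), A.vComp_id u, A.vId_comp u]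
    refine ⟨cast hcast w, trivial, fun y _ => huniq y _⟩
end

section
/- In a double category A with tabulators, an object I is bi-initial in the underlying horizontal 2-category H(A) if and only if the vertical identity id_I is bi-initial in the 2-category V(A) of vertical morphisms. -/
universe u

/-!
STATEMENT 14: In a double category `A` with tabulators, an object `I` is bi-initial in
the underlying horizontal 2-category `H(A)` if and only if the vertical identity `vId I`
is bi-initial in the 2-category `V(A)` of vertical morphisms.
-/
section Helpers

theorem heq_of_casts_eq {α β γ : Sort v} {a : α} {b : β} (h1 : α = γ) (h2 : β = γ)
    (h : cast h1 a = cast h2 b) : HEq a b := by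
  subst h1; subst h2; exact heq_of_eq (by simpa using h)

theorem sigma3_eq {α β : Type v} {γ : α → β → Type v} {a a' : α} {b b' : β}
    {c : γ a b} {c' : γ a' b'}
    (h : (⟨a, b, c⟩ : Σ x y, γ x y) = ⟨a', b', c'⟩) : a = a' ∧ b = b' ∧ HEq c c' := by
  injection h with h1 h2
  subst h1
  injection eq_of_heq h2 with h3 h4
  exact ⟨rfl, h3, h4⟩

theorem DoubleCat.compH_heq (A : DoubleCat.{u}) {a b c a' b' c' : A.Obj}
    {u u₁ : A.Ver a a'} {v v₁ : A.Ver b b'} {w w₁ : A.Ver c c'}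
    {f f₁ : A.Hor a b} {g g₁ : A.Hor a' b'} {f₂ f₃ : A.Hor b c} {g₂ g₃ : A.Hor b' c'}
    (hu : u = u₁) (hv : v = v₁) (hw : w = w₁) (hf : f = f₁) (hg : g = g₁)
    (hf₂ : f₂ = f₃) (hg₂ : g₂ = g₃)
    {α : A.Sq u v f g} {α₁ : A.Sq u₁ v₁ f₁ g₁} {β : A.Sq v w f₂ g₂} {β₁ : A.Sq v₁ w₁ f₃ g₃}
    (hα : HEq α α₁) (hβ : HEq β β₁) : HEq (A.compH α β) (A.compH α₁ β₁) := by
  subst hu; subst hv; subst hw; subst hf; subst hg; subst hf₂; subst hg₂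
  rw [eq_of_heq hα, eq_of_heq hβ]

theorem DoubleCat.compV_heq (A : DoubleCat.{u}) {a b c d e e' : A.Obj}
    {u u₁ : A.Ver a c} {v v₁ : A.Ver b d} {u' u'₁ : A.Ver c e} {v' v'₁ : A.Ver d e'}
    {f f₁ : A.Hor a b} {g g₁ : A.Hor c d} {h h₁ : A.Hor e e'}
    (hu : u = u₁) (hv : v = v₁) (hu' : u' = u'₁) (hv' : v' = v'₁)
    (hf : f = f₁) (hg : g = g₁) (hh : h = h₁)
    {α : A.Sq u v f g} {α₁ : A.Sq u₁ v₁ f₁ g₁} {β : A.Sq u' v' g h} {β₁ : A.Sq u'₁ v'₁ g₁ h₁}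
    (hα : HEq α α₁) (hβ : HEq β β₁) : HEq (A.compV α β) (A.compV α₁ β₁) := by
  subst hu; subst hv; subst hu'; subst hv'; subst hf; subst hg; subst hh
  rw [eq_of_heq hα, eq_of_heq hβ]

end Helpers
/-- With tabulators, H-bi-initiality implies double bi-initiality. -/
theorem DoubleCat.hbi_to_double {A : DoubleCat.{u}} (hTab : A.HasTabulators) {I : A.Obj}
    (hH : A.HBiInitial I) : A.DoubleBiInitial I := by
  have hEx : ∀ {X : A.Obj} (f g : A.Hor I X),
      Nonempty (A.Sq (A.vId I) (A.vId X) f g) := by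
    intro X f g
    obtain ⟨α, -, -⟩ := hH.2 f g
    exact ⟨α⟩
  have huniq : ∀ {X : A.Obj} (f g : A.Hor I X) (x y : A.Sq (A.vId I) (A.vId X) f g),
      x = y := by
    intro X f g x y
    obtain ⟨z, -, hz⟩ := hH.2 f g
    rw [hz x trivial, hz y trivial]
  refine ⟨hH.1, ?_⟩
  intro X Y u f g
  obtain ⟨T, p, q, τ, hT⟩ := hTab u
  have key : ∀ (γ γ' : A.Sq (A.vId I) u f g), γ = γ' := by
    intro γ γ'
    obtain ⟨t, ht, -⟩ := hT.1 f g γ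
    obtain ⟨t', ht', -⟩ := hT.1 f g γ'
    obtain ⟨hf, hg, hγ⟩ := sigma3_eq ht
    obtain ⟨hf', hg', hγ'⟩ := sigma3_eq ht'
    obtain ⟨θ⟩ := hEx t t'
    -- γ is heq to compH θ τ
    have c1 : HEq γ (A.compH θ τ) := by
      have s1 : HEq γ (A.compV γ (A.idSqV g)) := (A.compV_idSqV γ).symm
      have s2 : HEq (A.compV γ (A.idSqV g))
          (A.compV (A.compH (A.idSqV t) τ) (A.compH θ (A.idSqV q))) := by
        refine A.compV_heq rfl rfl rfl rfl hf.symm hg.symm hg'.symm hγ.symm ?_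
        exact heq_of_casts_eq rfl (by rw [hg, hg']) (huniq g g _ _)
      have s3 : A.compV (A.compH (A.idSqV t) τ) (A.compH θ (A.idSqV q))
          = A.compH (A.compV (A.idSqV t) θ) (A.compV τ (A.idSqV q)) :=
        A.interchange (A.idSqV t) τ θ (A.idSqV q)
      have s4 : HEq (A.compH (A.compV (A.idSqV t) θ) (A.compV τ (A.idSqV q)))
          (A.compH θ τ) :=
        A.compH_heq (A.vId_comp _) (A.vId_comp _) (A.vComp_id _) rfl rfl rfl rfl
          (A.idSqV_compV θ) (A.compV_idSqV τ)
      exact ((s1.trans s2).trans (heq_of_eq s3)).trans s4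
    -- γ' is heq to compH θ τ
    have c2 : HEq γ' (A.compH θ τ) := by
      have s1 : HEq γ' (A.compV (A.idSqV f) γ') := (A.idSqV_compV γ').symm
      have s2 : HEq (A.compV (A.idSqV f) γ')
          (A.compV (A.compH θ (A.idSqV p)) (A.compH (A.idSqV t') τ)) := by
        refine A.compV_heq rfl rfl rfl rfl hf.symm hf'.symm hg'.symm ?_ hγ'.symm
        exact heq_of_casts_eq rfl (by rw [hf, hf']) (huniq f f _ _)
      have s3 : A.compV (A.compH θ (A.idSqV p)) (A.compH (A.idSqV t') τ)
          = A.compH (A.compV θ (A.idSqV t')) (A.compV (A.idSqV p) τ) :=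
        A.interchange θ (A.idSqV p) (A.idSqV t') τ
      have s4 : HEq (A.compH (A.compV θ (A.idSqV t')) (A.compV (A.idSqV p) τ))
          (A.compH θ τ) :=
        A.compH_heq (A.vId_comp _) (A.vId_comp _) (A.vId_comp _) rfl rfl rfl rfl
          (A.compV_idSqV θ) (A.idSqV_compV τ)
      exact ((s1.trans s2).trans (heq_of_eq s3)).trans s4
    exact eq_of_heq (c1.trans c2.symm)
  -- existence
  obtain ⟨t⟩ := hH.1 T
  obtain ⟨δ₀⟩ := hEx f (A.hComp t p)
  obtain ⟨δ₁⟩ := hEx (A.hComp t q) g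
  have γ₁ : A.Sq (A.vId I) u (A.hComp t p) g :=
    cast (by rw [A.vId_comp, A.vComp_id]) (A.compV (A.compH (A.idSqV t) τ) δ₁)
  have γ₀ : A.Sq (A.vId I) u f g :=
    cast (by rw [A.vId_comp, A.vId_comp]) (A.compV δ₀ γ₁)
  exact ⟨γ₀, trivial, fun y _ => key y γ₀⟩

/-- Double bi-initiality implies bi-initiality in `V(A)`. -/
theorem DoubleCat.double_to_v {A : DoubleCat.{u}} {I : A.Obj}
    (hD : A.DoubleBiInitial I) : A.VBiInitial (A.vIdObj I) := by
  obtain ⟨hHor, hSq⟩ := hD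
  have ex : ∀ {X Y : A.Obj} (u : A.Ver X Y) (f : A.Hor I X) (g : A.Hor I Y),
      Nonempty (A.Sq (A.vId I) u f g) := by
    intro X Y u f g
    obtain ⟨α, -, -⟩ := hSq u f g
    exact ⟨α⟩
  have un : ∀ {X Y : A.Obj} (u : A.Ver X Y) (f : A.Hor I X) (g : A.Hor I Y)
      (x y : A.Sq (A.vId I) u f g), x = y := by
    intro X Y u f g x y
    obtain ⟨z, -, hz⟩ := hSq u f g
    rw [hz x trivial, hz y trivial]
  constructor
  · intro v
    obtain ⟨f⟩ := hHor v.src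
    obtain ⟨g⟩ := hHor v.tgt
    obtain ⟨sq⟩ := ex v.ver f g
    exact ⟨⟨f, g, sq⟩⟩
  · intro v p q
    obtain ⟨σ₀⟩ := ex (A.vId v.src) p.top q.top
    obtain ⟨σ₁⟩ := ex (A.vId v.tgt) p.bot q.bot
    have h1 : A.Sq (A.vComp (A.vId I) (A.vId I)) (A.vComp (A.vId v.src) v.ver)
        p.top q.bot = A.Sq (A.vId I) v.ver p.top q.bot := by
      rw [A.vId_comp, A.vId_comp]
    have h2 : A.Sq (A.vComp (A.vId I) (A.vId I)) (A.vComp v.ver (A.vId v.tgt))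
        p.top q.bot = A.Sq (A.vId I) v.ver p.top q.bot := by
      rw [A.vId_comp, A.vComp_id]
    have pasting : HEq (A.compV σ₀ q.sq) (A.compV p.sq σ₁) :=
      heq_of_casts_eq h1 h2 (un v.ver p.top q.bot _ _)
    refine ⟨⟨σ₀, σ₁, pasting⟩, trivial, ?_⟩
    rintro ⟨a, b, hp⟩ -
    obtain rfl : a = σ₀ := un (A.vId v.src) p.top q.top a σ₀
    obtain rfl : b = σ₁ := un (A.vId v.tgt) p.bot q.bot b σ₁
    rfl

/-- Bi-initiality in `V(A)` implies bi-initiality in `H(A)`. -/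
theorem DoubleCat.v_to_h {A : DoubleCat.{u}} {I : A.Obj}
    (hV : A.VBiInitial (A.vIdObj I)) : A.HBiInitial I := by
  obtain ⟨hM, hC⟩ := hV
  constructor
  · intro X
    obtain ⟨p⟩ := hM ⟨A.vId X⟩
    exact ⟨p.top⟩
  · intro X f g
    let pf : VHom (A.vIdObj I) (⟨A.vId X⟩ : VObj A) := ⟨f, f, A.idSqV f⟩
    let qg : VHom (A.vIdObj I) (⟨A.vId X⟩ : VObj A) := ⟨g, g, A.idSqV g⟩
    let mkCell : A.Sq (A.vId I) (A.vId X) f g → V2Cell pf qg := fun α =>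
      ⟨α, α, (A.compV_idSqV α).trans (A.idSqV_compV α).symm⟩
    obtain ⟨σ, -, hu⟩ := hC ⟨A.vId X⟩ pf qg
    refine ⟨σ.σ₀, trivial, ?_⟩
    intro y _
    have h1 : mkCell y = σ := hu (mkCell y) trivial
    exact congrArg V2Cell.σ₀ h1
theorem stmt14 {A : DoubleCat.{u}} (hTab : A.HasTabulators) (I : A.Obj) :
    A.HBiInitial I ↔ A.VBiInitial (A.vIdObj I) :=
  ⟨fun h => DoubleCat.double_to_v (DoubleCat.hbi_to_double hTab h),
   fun h => DoubleCat.v_to_h h⟩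
end

section
/- Let C be a 2-category and F : C^op → Cat a normal pseudo-functor. Then F has a bi-representation (an object I with a pseudo-natural adjoint equivalence C(−, I) ≃ F) if and only if there is an object I of C with an object i in F(I) such that (I, i) is double bi-initial in the double category of elements el(F). -/
open CategoryTheory
open scoped CategoryTheory.Bicategory

universe u

variable {C : Type u} [Bicategory.{u, u} C] [Bicategory.Strict C]

/-- A normal pseudofunctor `C^op ⟶ Cat` on a 2-category `C` (contravariant on 1-morphisms,
covariant on 2-morphisms): it preserves identities strictly and composition up to
coherent compositor isomorphisms. -/
structure NPCat (C : Type u) [Bicategory.{u, u} C] [Bicategory.Strict C] where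
  obj : C → Cat.{u, u}
  map : ∀ {X Y : C}, (X ⟶ Y) → (obj Y ⥤ obj X)
  map₂ : ∀ {X Y : C} {f g : X ⟶ Y}, (f ⟶ g) → (map f ⟶ map g)
  map₂_id : ∀ {X Y : C} (f : X ⟶ Y), map₂ (𝟙 f) = 𝟙 (map f)
  map₂_comp : ∀ {X Y : C} {f g h : X ⟶ Y} (γ : f ⟶ g) (δ : g ⟶ h),
      map₂ (γ ≫ δ) = map₂ γ ≫ map₂ δ
  map_id : ∀ X : C, map (𝟙 X) = 𝟭 (obj X)
  mapComp : ∀ {X Y Z : C} (f : X ⟶ Y) (g : Y ⟶ Z), map g ⋙ map f ≅ map (f ≫ g)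
  mapComp_natural : ∀ {X Y Z : C} {f f' : X ⟶ Y} {g g' : Y ⟶ Z} (γ : f ⟶ f') (δ : g ⟶ g'),
      (CategoryTheory.Functor.whiskerRight (map₂ δ) (map f) ≫
        CategoryTheory.Functor.whiskerLeft (map g') (map₂ γ)) ≫ (mapComp f' g').hom =
      (mapComp f g).hom ≫ map₂ (γ ▷ g ≫ f' ◁ δ)
  mapComp_assoc : ∀ {X Y Z W : C} (f : X ⟶ Y) (g : Y ⟶ Z) (h : Z ⟶ W),
      CategoryTheory.Functor.whiskerLeft (map h) (mapComp f g).hom ≫ (mapComp (f ≫ g) h).hom =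
      CategoryTheory.Functor.whiskerRight (mapComp g h).hom (map f) ≫ (mapComp f (g ≫ h)).hom ≫
        eqToHom (by rw [Category.assoc])
  mapComp_id_left : ∀ {X Y : C} (f : X ⟶ Y),
      (mapComp (𝟙 X) f).hom = eqToHom (by rw [map_id, Functor.comp_id, Category.id_comp])
  mapComp_id_right : ∀ {X Y : C} (f : X ⟶ Y),
      (mapComp f (𝟙 Y)).hom = eqToHom (by rw [map_id, Functor.id_comp, Category.comp_id])

/-- Precomposition with `c` as a functor between hom-categories of a 2-category. -/
def precompF (I : C) {X Y : C} (c : X ⟶ Y) : (Y ⟶ I) ⥤ (X ⟶ I) where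
  obj h := c ≫ h
  map η := c ◁ η
  map_id h := Bicategory.whiskerLeft_id c h
  map_comp η θ := Bicategory.whiskerLeft_comp c η θ

/-- Whiskering of `precompF` in the first variable. -/
def precompNat (I : C) {X Y : C} {c d : X ⟶ Y} (γ : c ⟶ d) :
    precompF I c ⟶ precompF I d where
  app h := γ ▷ h
  naturality _ _ η := Bicategory.whisker_exchange γ η

lemma precompF_comp (I : C) {X Y Z : C} (c : X ⟶ Y) (d : Y ⟶ Z) :
    precompF I d ⋙ precompF I c = precompF I (c ≫ d) := by
  refine CategoryTheory.Functor.ext (fun h => (Category.assoc c d h).symm) ?_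
  intro h h' η
  simp [precompF, Bicategory.comp_whiskerLeft, Bicategory.Strict.associator_eqToIso,
    eqToHom_trans, eqToHom_trans_assoc]
  erw [eqToHom_trans, eqToHom_refl, Category.comp_id]

/-- A bi-representation of a normal pseudofunctor `F : C^op ⟶ Cat`: an object `I`
together with a pseudo-natural (adjoint) equivalence `C(−, I) ≃ F`. -/
structure BiRep (F : NPCat C) (I : C) where
  app : ∀ X : C, (X ⟶ I) ⥤ F.obj X
  app_equiv : ∀ X : C, (app X).IsEquivalence
  nat : ∀ {X Y : C} (c : X ⟶ Y), app Y ⋙ F.map c ≅ precompF I c ⋙ app X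
  nat_natural : ∀ {X Y : C} {c d : X ⟶ Y} (γ : c ⟶ d),
      CategoryTheory.Functor.whiskerLeft (app Y) (F.map₂ γ) ≫ (nat d).hom =
      (nat c).hom ≫ CategoryTheory.Functor.whiskerRight (precompNat I γ) (app X)
  nat_comp : ∀ {X Y Z : C} (c : X ⟶ Y) (d : Y ⟶ Z),
      (nat (c ≫ d)).hom =
      CategoryTheory.Functor.whiskerLeft (app Z) (F.mapComp c d).inv ≫
        CategoryTheory.Functor.whiskerRight (nat d).hom (F.map c) ≫
        CategoryTheory.Functor.whiskerLeft (precompF I d) (nat c).hom ≫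
        eqToHom (congrArg (fun K => K ⋙ app X) (precompF_comp I c d))

/-!
STATEMENT 15: A normal pseudofunctor `F : C^op ⟶ Cat` has a bi-representation `(I, ρ)`
if and only if there is an object `I` of `C` together with an object `i ∈ F(I)` such that
`(I, i)` is double bi-initial in the double category of elements `el(F)`.

Double bi-initiality of `(I, i)` in `el(F)` is expressed explicitly: (i) for every object
`(X, x)` of `el(F)` there is a horizontal morphism `(I, i) → (X, x)`, i.e. a morphism
`c : X ⟶ I` with an isomorphism `x ≅ F(c)(i)`; and (ii) for every vertical morphism
`α : x ⟶ y` in `F(X)` and every pair of horizontal morphisms `(c, ψ) : (I, i) → (X, x)`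
and `(d, φ) : (I, i) → (X, y)`, there is a unique square filler, i.e. a unique 2-morphism
`γ : c ⟶ d` with `ψ.hom ≫ F(γ)_i = α ≫ φ.hom`.
-/
/-!
An object `i ∈ F(I)` induces, as in the bicategorical Yoneda lemma, a pseudo-natural
transformation `C(−, I) ⟹ F` with components `c ↦ F(c)(i)`. Conversely a bi-representation `ρ`
has components isomorphic to those induced by `ρ_I(1_I)`, through its pseudo-naturality
constraints `F(c)(ρ_I(1_I)) ≅ ρ_X(c ≫ 1_I) = ρ_X(c)`. Double bi-initiality of `(I, i)` says
precisely that every component is essentially surjective (horizontal morphisms exist) and fully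
faithful (squares exist uniquely), i.e. an equivalence.
-/

namespace CategoryTheory.Functor

variable {A : Type*} [Category A] {B : Type*} [Category B] (G : A ⥤ B)

lemma existsUnique_comp_map_eq [G.Full] [G.Faithful] {x y : B} (α : x ⟶ y) {c d : A}
    (ψ : x ≅ G.obj c) (φ : y ≅ G.obj d) : ∃! γ : c ⟶ d, ψ.hom ≫ G.map γ = α ≫ φ.hom := by
  refine ⟨G.preimage (ψ.inv ≫ α ≫ φ.hom), by simp, fun γ hγ => G.map_injective ?_⟩
  rw [map_preimage, ← hγ, Iso.inv_hom_id_assoc]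

lemma isEquivalence_iff_forall_exists_iso_and_existsUnique :
    G.IsEquivalence ↔
      (∀ x : B, ∃ c : A, Nonempty (x ≅ G.obj c)) ∧
      (∀ (x y : B) (α : x ⟶ y) (c d : A) (ψ : x ≅ G.obj c) (φ : y ≅ G.obj d),
        ∃! γ : c ⟶ d, ψ.hom ≫ G.map γ = α ≫ φ.hom) := by
  refine ⟨fun _ => ⟨fun x => ⟨G.objPreimage x, ⟨(G.objObjPreimageIso x).symm⟩⟩,
    fun _ _ α _ _ ψ φ => G.existsUnique_comp_map_eq α ψ φ⟩, fun ⟨hess, hsq⟩ => ?_⟩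
  have hbij (c d : A) : Function.Bijective (G.map : (c ⟶ d) → _) := by
    refine (Function.bijective_iff_existsUnique _).2 fun α => ?_
    simpa using hsq _ _ α c d (Iso.refl _) (Iso.refl _)
  exact
    { faithful := ⟨fun h => (hbij _ _).injective h⟩
      full := ⟨(hbij _ _).surjective⟩
      essSurj := ⟨fun x => (hess x).imp fun _ ⟨e⟩ => ⟨e.symm⟩⟩ }

end CategoryTheory.Functor

namespace NPCat

variable (F : NPCat C) {I : C} (i : F.obj I)

def IsDoubleBiInitial : Prop :=
  (∀ (X : C) (x : F.obj X), ∃ c : X ⟶ I, Nonempty (x ≅ (F.map c).obj i)) ∧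
    ∀ (X : C) (x y : F.obj X) (α : x ⟶ y) (c d : X ⟶ I)
      (ψ : x ≅ (F.map c).obj i) (φ : y ≅ (F.map d).obj i),
      ∃! γ : c ⟶ d, ψ.hom ≫ (F.map₂ γ).app i = α ≫ φ.hom

def yonedaApp (X : C) : (X ⟶ I) ⥤ F.obj X where
  obj c := (F.map c).obj i
  map γ := (F.map₂ γ).app i
  map_id c := by rw [F.map₂_id]; rfl
  map_comp γ δ := by rw [F.map₂_comp]; rfl

lemma isDoubleBiInitial_iff_isEquivalence_yonedaApp :
    F.IsDoubleBiInitial i ↔ ∀ X : C, (F.yonedaApp i X).IsEquivalence := by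
  simp only [Functor.isEquivalence_iff_forall_exists_iso_and_existsUnique, forall_and]
  rfl

def yonedaNat {X Y : C} (c : X ⟶ Y) :
    F.yonedaApp i Y ⋙ F.map c ≅ precompF I c ⋙ F.yonedaApp i X :=
  NatIso.ofComponents (fun h => (F.mapComp c h).app i) fun η => by
    simpa [yonedaApp, precompF, F.map₂_id] using NatTrans.congr_app (F.mapComp_natural (𝟙 c) η) i

lemma yonedaNat_natural {X Y : C} {c d : X ⟶ Y} (γ : c ⟶ d) :
    Functor.whiskerLeft (F.yonedaApp i Y) (F.map₂ γ) ≫ (F.yonedaNat i d).hom =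
      (F.yonedaNat i c).hom ≫ Functor.whiskerRight (precompNat I γ) (F.yonedaApp i X) := by
  ext h
  have h₁ := NatTrans.congr_app (F.mapComp_natural γ (𝟙 h)) i
  simp only [Functor.comp_obj, F.map₂_id, Functor.whiskerRight_id', Category.id_comp,
    NatTrans.comp_app, Functor.whiskerLeft_app, Bicategory.whiskerLeft_id, Category.comp_id] at h₁
  exact h₁

lemma yonedaNat_comp {X Y Z : C} (c : X ⟶ Y) (d : Y ⟶ Z) :
    (F.yonedaNat i (c ≫ d)).hom =
      Functor.whiskerLeft (F.yonedaApp i Z) (F.mapComp c d).inv ≫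
        Functor.whiskerRight (F.yonedaNat i d).hom (F.map c) ≫
        Functor.whiskerLeft (precompF I d) (F.yonedaNat i c).hom ≫
        eqToHom (congrArg (fun K => K ⋙ F.yonedaApp i X) (precompF_comp I c d)) := by
  ext h
  have h₁ := NatTrans.congr_app (F.mapComp_assoc c d h) i
  simp only [NatTrans.comp_app, Functor.whiskerRight_app, Functor.whiskerLeft_app,
    eqToHom_app] at h₁
  simp only [NatTrans.comp_app, Functor.whiskerRight_app, Functor.whiskerLeft_app, yonedaNat,
    yonedaApp, precompF]
  rw [← Iso.app_inv, Iso.eq_inv_comp]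
  erw [eqToHom_app]
  exact h₁

def yonedaBiRep (h : ∀ X : C, (F.yonedaApp i X).IsEquivalence) : BiRep F I where
  app := F.yonedaApp i
  app_equiv := h
  nat := F.yonedaNat i
  nat_natural := F.yonedaNat_natural i
  nat_comp := F.yonedaNat_comp i

end NPCat

namespace BiRep

variable {F : NPCat C} {I : C} (R : BiRep F I)

def yonedaAppIso (X : C) : F.yonedaApp ((R.app I).obj (𝟙 I)) X ≅ R.app X :=
  NatIso.ofComponents
    (fun c => (R.nat c).app (𝟙 I) ≪≫
      eqToIso (congrArg (R.app X).obj (Bicategory.Strict.comp_id c)))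
    fun {c d} γ => by
      have h₁ := NatTrans.congr_app (R.nat_natural γ) (𝟙 I)
      simp only [NatTrans.comp_app, Functor.whiskerLeft_app, Functor.whiskerRight_app] at h₁
      simp only [NPCat.yonedaApp, Iso.trans_hom, Iso.app_hom, eqToIso.hom, ← Category.assoc, h₁]
      simp only [Functor.comp_obj, precompNat, Bicategory.whiskerRight_id,
        Bicategory.Strict.rightUnitor_eqToIso, eqToIso.hom, eqToIso.inv, Category.assoc,
        NatIso.cancel_natIso_hom_left]
      erw [Functor.map_comp, Functor.map_comp, eqToHom_map, eqToHom_map]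
      simp

lemma isEquivalence_yonedaApp (X : C) : (F.yonedaApp ((R.app I).obj (𝟙 I)) X).IsEquivalence :=
  have := R.app_equiv X
  Functor.isEquivalence_of_iso (R.yonedaAppIso X).symm

end BiRep

theorem stmt15 (F : NPCat C) :
    (∃ I : C, Nonempty (BiRep F I)) ↔
    ∃ (I : C) (i : F.obj I),
      (∀ (X : C) (x : F.obj X), ∃ c : X ⟶ I, Nonempty (x ≅ (F.map c).obj i)) ∧
      (∀ (X : C) (x y : F.obj X) (α : x ⟶ y) (c d : X ⟶ I)
        (ψ : x ≅ (F.map c).obj i) (φ : y ≅ (F.map d).obj i),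
        ∃! γ : c ⟶ d, ψ.hom ≫ (F.map₂ γ).app i = α ≫ φ.hom) := by
  constructor
  · rintro ⟨I, ⟨R⟩⟩
    exact ⟨I, _, (F.isDoubleBiInitial_iff_isEquivalence_yonedaApp _).2 R.isEquivalence_yonedaApp⟩
  · rintro ⟨I, i, h⟩
    exact ⟨I, ⟨F.yonedaBiRep i ((F.isDoubleBiInitial_iff_isEquivalence_yonedaApp i).1 h)⟩⟩
end
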